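/- arXiv:2506.18746 — 6 statements merged into one kernel-verified Lean document; each statement's English description precedes it below -/
import Mathlib

section
/- Let μ : ℝ^d → (0,∞) be continuously differentiable, M symmetric positive definite, and h ∈ ℝ. Then the leapfrog map Φ_h : ℝ^d × ℝ^d → ℝ^d × ℝ^d preserves Lebesgue measure (2d-dimensional volume): Φ_h is a measure-preserving bijection of ℝ^{2d} equipped with Lebesgue measure. -/
open Matrix MeasureTheory

/-- Gradient of `log μ` in standard coordinates on `ℝ^d`. -/
noncomputable def gradLog {d : ℕ} (μ : (Fin d → ℝ) → ℝ) (θ : Fin d → ℝ) : Fin d → ℝ :=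
  fun i => fderiv ℝ (fun x => Real.log (μ x)) θ (Pi.single i 1)

/-- The leapfrog map with step size `h`, target `μ` and mass matrix `M`. -/
noncomputable def leapfrog {d : ℕ} (μ : (Fin d → ℝ) → ℝ) (M : Matrix (Fin d) (Fin d) ℝ)
    (h : ℝ) (z : (Fin d → ℝ) × (Fin d → ℝ)) : (Fin d → ℝ) × (Fin d → ℝ) :=
  let θ' := z.1 + M⁻¹.mulVec (h • z.2 + (h ^ 2 / 2) • gradLog μ z.1)
  (θ', z.2 + (h / 2) • (gradLog μ z.1 + gradLog μ θ'))

/-!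
The leapfrog map is the composition half-kick ∘ drift ∘ half-kick of the shears
`(θ, ρ) ↦ (θ, ρ + (h/2) ∇log μ(θ))` and `(θ, ρ) ↦ (θ + M⁻¹ (h ρ), ρ)`. A shear adding a
measurable function of one coordinate to the other is a bijection, and it preserves the product
of translation-invariant measures by Fubini: on each fibre it is a translation.
-/

section Shear

variable {α G : Type*}

def kick [Add G] (g : α → G) (z : α × G) : α × G := (z.1, z.2 + g z.1)

def drift [Add G] (g : α → G) (z : G × α) : G × α := (z.1 + g z.2, z.2)

lemma drift_eq_swap_comp_kick [Add G] (g : α → G) :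
    drift g = Prod.swap ∘ kick g ∘ Prod.swap := rfl

lemma kick_bijective [AddGroup G] (g : α → G) : Function.Bijective (kick g) :=
  Function.bijective_iff_has_inverse.2
    ⟨kick (-g), fun z => by simp [kick], fun z => by simp [kick]⟩

lemma drift_bijective [AddGroup G] (g : α → G) : Function.Bijective (drift g) := by
  rw [drift_eq_swap_comp_kick]
  exact Prod.swap_bijective.comp ((kick_bijective g).comp Prod.swap_bijective)

variable [MeasurableSpace α] [MeasurableSpace G] [AddGroup G] [MeasurableAdd₂ G]
  (μ : Measure α) (ν : Measure G) [SFinite μ] [SFinite ν] [ν.IsAddRightInvariant]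
  {g : α → G}

lemma kick_measurePreserving (hg : Measurable g) :
    MeasurePreserving (kick g) (μ.prod ν) (μ.prod ν) :=
  (MeasurePreserving.id μ).skew_product (g := fun x y => y + g x)
    (measurable_snd.add (hg.comp measurable_fst))
    (Filter.Eventually.of_forall fun x => (measurePreserving_add_right ν (g x)).map_eq)

lemma drift_measurePreserving (hg : Measurable g) :
    MeasurePreserving (drift g) (ν.prod μ) (ν.prod μ) := by
  rw [drift_eq_swap_comp_kick]
  exact Measure.measurePreserving_swap.comp
    ((kick_measurePreserving μ ν hg).comp Measure.measurePreserving_swap)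

end Shear

lemma leapfrog_eq_kick_comp_drift_comp_kick {d : ℕ} (μ : (Fin d → ℝ) → ℝ)
    (M : Matrix (Fin d) (Fin d) ℝ) (h : ℝ) :
    leapfrog μ M h =
      kick ((h / 2) • gradLog μ) ∘ drift (fun ρ => M⁻¹ *ᵥ (h • ρ)) ∘
        kick ((h / 2) • gradLog μ) := by
  funext ⟨θ, ρ⟩
  have hdrift : h • (ρ + (h / 2) • gradLog μ θ) = h • ρ + (h ^ 2 / 2) • gradLog μ θ := by
    rw [smul_add, smul_smul]
    ring_nf
  simp only [leapfrog, kick, drift, Function.comp_apply, Pi.smul_apply, hdrift, smul_add]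
  exact Prod.ext rfl (add_assoc _ _ _).symm

lemma measurable_gradLog {d : ℕ} (μ : (Fin d → ℝ) → ℝ) : Measurable (gradLog μ) :=
  measurable_pi_lambda _ fun _ => measurable_fderiv_apply_const ℝ _ _

theorem leapfrog_measurePreserving_general (d : ℕ) (μ : (Fin d → ℝ) → ℝ)
    (M : Matrix (Fin d) (Fin d) ℝ) (h : ℝ) :
    MeasurePreserving (leapfrog μ M h) volume volume ∧
    Function.Bijective (leapfrog μ M h) := by
  have hkick : Measurable ((h / 2) • gradLog μ) := (measurable_gradLog μ).const_smul _
  have hdrift : Measurable fun ρ : Fin d → ℝ => M⁻¹ *ᵥ (h • ρ) :=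
    ((mulVecLin M⁻¹).continuous_of_finiteDimensional.comp (continuous_const_smul h)).measurable
  rw [leapfrog_eq_kick_comp_drift_comp_kick]
  exact ⟨(kick_measurePreserving volume volume hkick).comp
      ((drift_measurePreserving volume volume hdrift).comp
        (kick_measurePreserving volume volume hkick)),
    (kick_bijective _).comp ((drift_bijective _).comp (kick_bijective _))⟩

/-- The leapfrog map is a measure-preserving bijection of `ℝ^d × ℝ^d` equipped with
Lebesgue (volume) measure. -/
theorem leapfrog_measurePreserving (d : ℕ) (μ : (Fin d → ℝ) → ℝ)
    (hμ : ContDiff ℝ 1 μ) (hμpos : ∀ θ, 0 < μ θ)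
    (M : Matrix (Fin d) (Fin d) ℝ) (hM : M.PosDef) (h : ℝ) :
    MeasurePreserving (leapfrog μ M h) volume volume ∧
    Function.Bijective (leapfrog μ M h) :=
  leapfrog_measurePreserving_general d μ M h
end

section
/- Fix an integer m ≥ 1 and set N = 2^{m−1}. Let b, c, B be independent random variables with b uniform on {0,1,…,N−1}, c uniform on {1,…,N}, and B Bernoulli(1/2) on {0,1}, and define the integration time index i = (b + c)·B + (b − N + 1 − c)·(1 − B). Then for every integer k, P[i = k] = (1/(2N²))·min(|k|, 2N − |k|) if 1 ≤ |k| ≤ 2N − 1, and P[i = k] = 0 otherwise; in particular i follows a symmetric discrete triangular law on {1−2N,…,2N−1}. -/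
/-!
The triple `(b, c, B)` puts mass `1/(2N²)` on each point of the box `[0, N-1] × [1, N] × {0, 1}`
and none elsewhere, so `P[i = k]` is `1/(2N²)` times the number of box points in the fibre of `k`.
On the slice `B = 1` the fibre is the line `b + c = k`, which meets the box in `min(k, 2N - k)`
points for `1 ≤ k ≤ 2N - 1`; on `B = 0` it is `b - c = k + N - 1`, the mirror image under
`b ↦ N - 1 - b`, giving the same count at `-k`. The first slice only produces positive values and
the second only negative ones, so exactly one of them contributes.
-/

open MeasureTheory Finset
open scoped ENNReal

theorem measure_comp_eq_card_filter_mul {Ω α β : Type*} [MeasurableSpace Ω] [MeasurableSpace α]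
    [Countable α] [MeasurableSingletonClass α] [DecidableEq α] [DecidableEq β] {P : Measure Ω}
    {X : Ω → α} (hX : Measurable X) {T : Finset α} {p : ℝ≥0∞}
    (hlaw : ∀ a, P (X ⁻¹' {a}) = if a ∈ T then p else 0) (g : α → β) (k : β) :
    P {ω | g (X ω) = k} = #(T.filter fun a => g a = k) * p := by
  have hmap : ∀ s : Set α, P.map X s = P (X ⁻¹' s) := fun s =>
    Measure.map_apply hX MeasurableSet.of_discrete
  calc P {ω | g (X ω) = k} = P.map X (g ⁻¹' {k}) := (hmap (g ⁻¹' {k})).symm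
    _ = ∑' a, (g ⁻¹' {k}).indicator (fun a => P.map X {a}) a :=
        (Measure.tsum_indicator_apply_singleton _ _ MeasurableSet.of_discrete).symm
    _ = ∑ a ∈ T.filter fun a => g a = k, p := by
        rw [tsum_eq_sum (s := T.filter fun a => g a = k)]
        · refine sum_congr rfl fun a ha => ?_
          rw [mem_filter] at ha
          simp [hmap, hlaw, ha.1, ha.2]
        · intro a ha
          rw [mem_filter, not_and'] at ha
          by_cases hk : g a = k <;> simp [hmap, hlaw, hk, ha]
    _ = _ := by rw [sum_const, nsmul_eq_mul]

theorem card_filter_product_graph {α β : Type*} [DecidableEq α] [DecidableEq β]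
    (s : Finset α) (t : Finset β) (φ : α → β) :
    #((s ×ˢ t).filter fun p => p.2 = φ p.1) = #(s.filter fun x => φ x ∈ t) := by
  refine card_nbij' Prod.fst (fun x => (x, φ x)) ?_ ?_ ?_ ?_
  · rintro ⟨x, y⟩; aesop
  · intro x; simp +contextual
  · rintro ⟨x, y⟩; simp +contextual
  · intro x; simp

theorem one_div_mul_one_div_mul_half_eq_ofReal {n : ℕ} (hn : n ≠ 0) :
    1 / (n : ℝ≥0∞) * (1 / n) * (1 / 2) = ENNReal.ofReal (1 / (2 * (n : ℝ) ^ 2)) := by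
  rw [ENNReal.ofReal_div_of_pos (by positivity), ENNReal.ofReal_one,
    show (2 * (n : ℝ) ^ 2) = ((2 * n ^ 2 : ℕ) : ℝ) by push_cast; ring, ENNReal.ofReal_natCast]
  simp only [one_div]
  rw [← ENNReal.mul_inv (by simp [hn]) (by simp), ← ENNReal.mul_inv (by simp) (by simp)]
  push_cast
  ring_nf

def bphmcIndex (N b c B : ℤ) : ℤ := (b + c) * B + (b - N + 1 - c) * (1 - B)

lemma bphmcIndex_one (N b c : ℤ) : bphmcIndex N b c 1 = b + c := by
  simp [bphmcIndex]

lemma bphmcIndex_zero (N b c : ℤ) : bphmcIndex N b c 0 = b - N + 1 - c := by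
  simp [bphmcIndex]

section Counting

variable (N k : ℤ)

lemma card_bphmcIndex_fiber_eq_add :
    #(((Icc 0 (N - 1) ×ˢ Icc 1 N) ×ˢ {0, 1}).filter fun a => bphmcIndex N a.1.1 a.1.2 a.2 = k) =
      #((Icc 0 (N - 1) ×ˢ Icc 1 N).filter fun p => p.2 = k - p.1) +
      #((Icc 0 (N - 1) ×ˢ Icc 1 N).filter fun p => p.2 = p.1 - N + 1 - k) := by
  rw [card_filter, sum_product, card_filter, card_filter, ← sum_add_distrib]
  refine sum_congr rfl fun p _ => ?_
  rw [sum_pair (zero_ne_one' ℤ), bphmcIndex_zero, bphmcIndex_one, add_comm]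
  dsimp only
  congr 2 <;> apply propext <;> omega

lemma card_filter_snd_eq_sub_fst :
    #((Icc 0 (N - 1) ×ˢ Icc 1 N).filter fun p => p.2 = k - p.1) =
      (min (N - 1) (k - 1) + 1 - max 0 (k - N)).toNat := by
  rw [card_filter_product_graph, ← Int.card_Icc]
  congr 1
  ext x
  simp only [mem_filter, mem_Icc]
  omega

lemma card_filter_snd_eq_fst_sub :
    #((Icc 0 (N - 1) ×ˢ Icc 1 N).filter fun p => p.2 = p.1 - N + 1 - k) =
      (min (N - 1) (2 * N - 1 + k) + 1 - max 0 (N + k)).toNat := by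
  rw [card_filter_product_graph _ _ fun x => x - N + 1 - k, ← Int.card_Icc]
  congr 1
  ext x
  simp only [mem_filter, mem_Icc]
  omega

theorem card_bphmcIndex_fiber :
    (#(((Icc 0 (N - 1) ×ˢ Icc 1 N) ×ˢ {0, 1}).filter
      fun a => bphmcIndex N a.1.1 a.1.2 a.2 = k) : ℤ) =
      if 1 ≤ |k| ∧ |k| ≤ 2 * N - 1 then min |k| (2 * N - |k|) else 0 := by
  rw [card_bphmcIndex_fiber_eq_add, card_filter_snd_eq_sub_fst, card_filter_snd_eq_fst_sub]
  rcases abs_cases k with ⟨hk, _⟩ | ⟨hk, _⟩ <;> rw [hk] <;> split_ifs <;> omega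

end Counting

theorem exact_bphmc_index_triangular_law_general
    (m : ℕ) (N : ℤ) (hN : N = 2 ^ (m - 1))
    {Ω : Type*} [MeasurableSpace Ω] (P : Measure Ω)
    (b c B : Ω → ℤ) (hb : Measurable b) (hc : Measurable c) (hB : Measurable B)
    -- b is uniform on {0, 1, …, N-1}
    (hbUnif : ∀ x : ℤ, P {ω | b ω = x} =
      if 0 ≤ x ∧ x ≤ N - 1 then (1 : ℝ≥0∞) / (N.toNat : ℝ≥0∞) else 0)
    -- c is uniform on {1, …, N}
    (hcUnif : ∀ x : ℤ, P {ω | c ω = x} =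
      if 1 ≤ x ∧ x ≤ N then (1 : ℝ≥0∞) / (N.toNat : ℝ≥0∞) else 0)
    -- B is Bernoulli(1/2) on {0, 1}
    (hBUnif : ∀ x : ℤ, P {ω | B ω = x} =
      if x = 0 ∨ x = 1 then (1 : ℝ≥0∞) / 2 else 0)
    -- b, c, B are independent
    (hIndep : ∀ x y z : ℤ, P {ω | b ω = x ∧ c ω = y ∧ B ω = z} =
      P {ω | b ω = x} * P {ω | c ω = y} * P {ω | B ω = z})
    (i : Ω → ℤ)
    (hi : ∀ ω, i ω = (b ω + c ω) * B ω + (b ω - N + 1 - c ω) * (1 - B ω)) :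
    ∀ k : ℤ, P {ω | i ω = k} =
      if 1 ≤ |k| ∧ |k| ≤ 2 * N - 1 then
        ENNReal.ofReal ((1 / (2 * (N : ℝ) ^ 2)) * min ((|k| : ℤ) : ℝ) (2 * (N : ℝ) - ((|k| : ℤ) : ℝ)))
      else 0 := by
  intro k
  have hN0 : 0 < N := hN ▸ pow_pos two_pos _
  have hNnat : ((N.toNat : ℕ) : ℝ) = N := by exact_mod_cast Int.toNat_of_nonneg hN0.le
  have hcount := card_bphmcIndex_fiber N k
  set T : Finset ((ℤ × ℤ) × ℤ) := (Icc 0 (N - 1) ×ˢ Icc 1 N) ×ˢ {0, 1}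
  have hlaw : ∀ a, P ((fun ω => ((b ω, c ω), B ω)) ⁻¹' {a}) =
      if a ∈ T then ENNReal.ofReal (1 / (2 * (N : ℝ) ^ 2)) else 0 := by
    rintro ⟨⟨x, y⟩, z⟩
    have hpre : (fun ω => ((b ω, c ω), B ω)) ⁻¹' {((x, y), z)} =
        {ω | b ω = x ∧ c ω = y ∧ B ω = z} := by
      ext ω; simp [and_assoc]
    rw [hpre, hIndep, hbUnif, hcUnif, hBUnif, ← hNnat,
      ← one_div_mul_one_div_mul_half_eq_ofReal (by omega : N.toNat ≠ 0)]
    simp only [T, mem_product, mem_Icc, mem_insert, mem_singleton]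
    rw [ite_zero_mul_ite_zero, ite_zero_mul_ite_zero]
  rw [show {ω | i ω = k} = {ω | bphmcIndex N (b ω) (c ω) (B ω) = k} by simp only [hi]; rfl,
    measure_comp_eq_card_filter_mul (hb.prodMk hc |>.prodMk hB) hlaw
      (fun a => bphmcIndex N a.1.1 a.1.2 a.2)]
  split_ifs at hcount ⊢
  · rw [mul_comm, ← ENNReal.ofReal_natCast, ← ENNReal.ofReal_mul (by positivity)]
    congr 2
    exact_mod_cast hcount
  · rw [Nat.cast_eq_zero] at hcount
    rw [hcount, Nat.cast_zero, zero_mul]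

/-- The integration time index in exact biased progressive HMC with `m` doublings follows
the symmetric discrete triangular law on `{1-2N, …, 2N-1}`, where `N = 2^(m-1)`:
`P[i = k] = (1/(2N²)) · min(|k|, 2N - |k|)` for `1 ≤ |k| ≤ 2N - 1` and `0` otherwise. -/
theorem exact_bphmc_index_triangular_law
    (m : ℕ) (hm : 1 ≤ m) (N : ℤ) (hN : N = 2 ^ (m - 1))
    {Ω : Type*} [MeasurableSpace Ω] (P : Measure Ω) [IsProbabilityMeasure P]
    (b c B : Ω → ℤ) (hb : Measurable b) (hc : Measurable c) (hB : Measurable B)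
    -- b is uniform on {0, 1, …, N-1}
    (hbUnif : ∀ x : ℤ, P {ω | b ω = x} =
      if 0 ≤ x ∧ x ≤ N - 1 then (1 : ℝ≥0∞) / (N.toNat : ℝ≥0∞) else 0)
    -- c is uniform on {1, …, N}
    (hcUnif : ∀ x : ℤ, P {ω | c ω = x} =
      if 1 ≤ x ∧ x ≤ N then (1 : ℝ≥0∞) / (N.toNat : ℝ≥0∞) else 0)
    -- B is Bernoulli(1/2) on {0, 1}
    (hBUnif : ∀ x : ℤ, P {ω | B ω = x} =
      if x = 0 ∨ x = 1 then (1 : ℝ≥0∞) / 2 else 0)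
    -- b, c, B are independent
    (hIndep : ∀ x y z : ℤ, P {ω | b ω = x ∧ c ω = y ∧ B ω = z} =
      P {ω | b ω = x} * P {ω | c ω = y} * P {ω | B ω = z})
    (i : Ω → ℤ)
    (hi : ∀ ω, i ω = (b ω + c ω) * B ω + (b ω - N + 1 - c ω) * (1 - B ω)) :
    ∀ k : ℤ, P {ω | i ω = k} =
      if 1 ≤ |k| ∧ |k| ≤ 2 * N - 1 then
        ENNReal.ofReal ((1 / (2 * (N : ℝ) ^ 2)) * min ((|k| : ℤ) : ℝ) (2 * (N : ℝ) - ((|k| : ℤ) : ℝ)))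
      else 0 :=
  exact_bphmc_index_triangular_law_general m N hN P b c B hb hc hB hbUnif hcUnif hBUnif hIndep i hi
end

section
/- Fix an integer m ≥ 1 and set N = 2^{m−1}. Let b, c, B be independent with b uniform on {0,…,N−1}, c uniform on {1,…,N}, B Bernoulli(1/2), and i = (b + c)·B + (b − N + 1 − c)·(1 − B). Then E[|i|] = N = 2^{m−1}. -/
/-!
Averaging over the direction bit `B`, the two candidate indices `b + c ≥ 0` and
`b - N + 1 - c ≤ 0` have absolute values summing to `2c + N - 1`, in which `b` cancels.
Summing over `c ∈ [1, N]` (an odd-number sum) and then over the `N` values of `b` gives `2N³`,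
and the law of `(b, c, B)` is uniform on these `2N²` triples, so `E|i| = N`.
-/

open MeasureTheory
open scoped ENNReal

namespace MeasureTheory

theorem Measure.eq_sum_smul_dirac {α : Type*} [MeasurableSpace α] [Countable α]
    [MeasurableSingletonClass α] [DecidableEq α] {μ : Measure α} {s : Finset α} {w : ℝ≥0∞}
    (h : ∀ a, μ {a} = if a ∈ s then w else 0) : μ = ∑ a ∈ s, w • Measure.dirac a := by
  refine Measure.ext_of_singleton fun a => ?_
  simp [h, Measure.finsetSum_apply, Set.indicator]

theorem integral_sum_smul_dirac {α : Type*} [MeasurableSpace α] [MeasurableSingletonClass α]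
    {s : Finset α} {w : ℝ≥0∞} (hw : w ≠ ∞) (f : α → ℝ) :
    ∫ a, f a ∂(∑ a ∈ s, w • Measure.dirac a) = w.toReal * ∑ a ∈ s, f a := by
  rw [integral_finsetSum_measure fun _ _ => (integrable_dirac (by simp)).smul_measure hw]
  simp [Finset.mul_sum]

end MeasureTheory

section

open Finset

theorem sum_Icc_two_mul_sub_one {N : ℤ} (hN : 0 ≤ N) : ∑ c ∈ Icc 1 N, (2 * c - 1) = N ^ 2 := by
  induction N, hN using Int.leInduction with
  | base => simp
  | succ N hN ih =>
    rw [← insert_Icc_right_eq_Icc_add_one (by omega), sum_insert (by simp), ih]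
    ring

def timeIndex (N b c B : ℤ) : ℤ := (b + c) * B + (b - N + 1 - c) * (1 - B)

theorem sum_bit_abs_timeIndex {N b c : ℤ} (hb₀ : 0 ≤ b) (hbN : b ≤ N - 1) (hc : 0 ≤ c) :
    ∑ B ∈ ({0, 1} : Finset ℤ), |timeIndex N b c B| = 2 * c + N - 1 := by
  rw [sum_pair zero_ne_one]
  simp only [timeIndex]
  rw [abs_of_nonpos (by linarith), abs_of_nonneg (by linarith)]
  ring

noncomputable def bcBSupport (N : ℤ) : Finset (ℤ × ℤ × ℤ) :=
  Icc 0 (N - 1) ×ˢ Icc 1 N ×ˢ {0, 1}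

theorem sum_bcBSupport_abs_timeIndex {N : ℤ} (hN : 0 ≤ N) :
    ∑ p ∈ bcBSupport N, |timeIndex N p.1 p.2.1 p.2.2| = 2 * N ^ 3 := by
  have sum_c_B (b : ℤ) (hb : b ∈ Icc 0 (N - 1)) :
      ∑ q ∈ Icc 1 N ×ˢ ({0, 1} : Finset ℤ), |timeIndex N b q.1 q.2| = 2 * N ^ 2 := by
    rw [mem_Icc] at hb
    calc ∑ q ∈ Icc 1 N ×ˢ ({0, 1} : Finset ℤ), |timeIndex N b q.1 q.2|
        = ∑ c ∈ Icc 1 N, ((2 * c - 1) + N) := by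
          rw [sum_product]
          refine sum_congr rfl fun c hc => ?_
          rw [sum_bit_abs_timeIndex hb.1 hb.2 (by linarith [(mem_Icc.1 hc).1])]
          ring
      _ = 2 * N ^ 2 := by
          rw [sum_add_distrib, sum_Icc_two_mul_sub_one hN, sum_const, Int.card_Icc,
            Int.add_sub_cancel, nsmul_eq_mul, Int.toNat_of_nonneg hN]
          ring
  rw [bcBSupport, sum_product, sum_congr rfl sum_c_B, sum_const, Int.card_Icc,
    sub_add_cancel, sub_zero, nsmul_eq_mul, Int.toNat_of_nonneg hN]
  ring

end

theorem exact_bphmc_expected_index_magnitude_general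
    (m : ℕ) (N : ℤ) (hN : N = 2 ^ (m - 1))
    {Ω : Type*} [MeasurableSpace Ω] (P : Measure Ω) [IsProbabilityMeasure P]
    (b c B : Ω → ℤ) (hb : Measurable b) (hc : Measurable c) (hB : Measurable B)
    -- b is uniform on {0, 1, …, N-1}
    (hbUnif : ∀ x : ℤ, P {ω | b ω = x} =
      if 0 ≤ x ∧ x ≤ N - 1 then (1 : ℝ≥0∞) / (N.toNat : ℝ≥0∞) else 0)
    -- c is uniform on {1, …, N}
    (hcUnif : ∀ x : ℤ, P {ω | c ω = x} =
      if 1 ≤ x ∧ x ≤ N then (1 : ℝ≥0∞) / (N.toNat : ℝ≥0∞) else 0)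
    -- B is Bernoulli(1/2) on {0, 1}
    (hBUnif : ∀ x : ℤ, P {ω | B ω = x} =
      if x = 0 ∨ x = 1 then (1 : ℝ≥0∞) / 2 else 0)
    -- b, c, B are independent
    (hIndep : ∀ x y z : ℤ, P {ω | b ω = x ∧ c ω = y ∧ B ω = z} =
      P {ω | b ω = x} * P {ω | c ω = y} * P {ω | B ω = z})
    (i : Ω → ℤ)
    (hi : ∀ ω, i ω = (b ω + c ω) * B ω + (b ω - N + 1 - c ω) * (1 - B ω)) :
    ∫ ω, ((|i ω| : ℤ) : ℝ) ∂P = (N : ℝ) := by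
  have hNpos : 0 < N := hN ▸ by positivity
  set T : Ω → ℤ × ℤ × ℤ := fun ω => (b ω, c ω, B ω)
  have hT : Measurable T := hb.prodMk (hc.prodMk hB)
  set w : ℝ≥0∞ := 1 / (N.toNat : ℝ≥0∞) * (1 / N.toNat) * (1 / 2)
  have law_eq : P.map T = ∑ p ∈ bcBSupport N, w • Measure.dirac p := by
    refine Measure.eq_sum_smul_dirac fun p => ?_
    have hfiber : T ⁻¹' {p} = {ω | b ω = p.1 ∧ c ω = p.2.1 ∧ B ω = p.2.2} := by
      ext ω; simp [T, Prod.ext_iff]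
    rw [Measure.map_apply hT (measurableSet_singleton p), hfiber, hIndep, hbUnif, hcUnif,
      hBUnif, ite_zero_mul_ite_zero, ite_zero_mul_ite_zero]
    exact if_congr (by simp [bcBSupport, and_assoc]) rfl rfl
  have hw : w.toReal = 1 / (2 * N ^ 2) := by
    have hcast : ((N.toNat : ℕ) : ℝ) = N := by exact_mod_cast Int.toNat_of_nonneg hNpos.le
    simp only [w, one_div, ENNReal.toReal_mul, ENNReal.toReal_inv, ENNReal.toReal_natCast,
      ENNReal.toReal_ofNat, hcast]
    ring
  have hN₀ : (N : ℝ) ≠ 0 := by exact_mod_cast hNpos.ne'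
  calc ∫ ω, ((|i ω| : ℤ) : ℝ) ∂P
      = ∫ p, ((|timeIndex N p.1 p.2.1 p.2.2| : ℤ) : ℝ) ∂(P.map T) := by
        rw [integral_map hT.aemeasurable Measurable.of_discrete.aestronglyMeasurable]
        simp [T, hi, timeIndex]
    _ = w.toReal * ∑ p ∈ bcBSupport N, ((|timeIndex N p.1 p.2.1 p.2.2| : ℤ) : ℝ) := by
        rw [law_eq, integral_sum_smul_dirac (by simp [w, ENNReal.mul_eq_top, hNpos])]
    _ = N := by
        rw [← Int.cast_sum, sum_bcBSupport_abs_timeIndex hNpos.le, hw]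
        field_simp
        push_cast
        ring

/-- The expected magnitude of the integration time index in exact biased progressive HMC
with `m` doublings equals `N = 2^(m-1)`. -/
theorem exact_bphmc_expected_index_magnitude
    (m : ℕ) (hm : 1 ≤ m) (N : ℤ) (hN : N = 2 ^ (m - 1))
    {Ω : Type*} [MeasurableSpace Ω] (P : Measure Ω) [IsProbabilityMeasure P]
    (b c B : Ω → ℤ) (hb : Measurable b) (hc : Measurable c) (hB : Measurable B)
    -- b is uniform on {0, 1, …, N-1}
    (hbUnif : ∀ x : ℤ, P {ω | b ω = x} =
      if 0 ≤ x ∧ x ≤ N - 1 then (1 : ℝ≥0∞) / (N.toNat : ℝ≥0∞) else 0)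
    -- c is uniform on {1, …, N}
    (hcUnif : ∀ x : ℤ, P {ω | c ω = x} =
      if 1 ≤ x ∧ x ≤ N then (1 : ℝ≥0∞) / (N.toNat : ℝ≥0∞) else 0)
    -- B is Bernoulli(1/2) on {0, 1}
    (hBUnif : ∀ x : ℤ, P {ω | B ω = x} =
      if x = 0 ∨ x = 1 then (1 : ℝ≥0∞) / 2 else 0)
    -- b, c, B are independent
    (hIndep : ∀ x y z : ℤ, P {ω | b ω = x ∧ c ω = y ∧ B ω = z} =
      P {ω | b ω = x} * P {ω | c ω = y} * P {ω | B ω = z})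
    (i : Ω → ℤ)
    (hi : ∀ ω, i ω = (b ω + c ω) * B ω + (b ω - N + 1 - c ω) * (1 - B ω)) :
    ∫ ω, ((|i ω| : ℤ) : ℝ) ∂P = (N : ℝ) :=
  exact_bphmc_expected_index_magnitude_general m N hN P b c B hb hc hB hbUnif hcUnif hBUnif hIndep i
    hi
end

section
/- Let (A, 𝒜, ζ) be a measure space, Ψ : A → A a measurable involution (Ψ ∘ Ψ = id) that preserves ζ, and μ̂ : A → (0,∞) a measurable density. Define the acceptance function α(z) = min(1, μ̂(Ψ(z))/μ̂(z)). Then for all bounded measurable f, g : A → ℝ, ∫ f(z) g(Ψ(z)) α(z) μ̂(z) dζ(z) = ∫ g(z) f(Ψ(z)) α(z) μ̂(z) dζ(z); that is, the involution-based Metropolis proposal satisfies detailed balance with respect to the measure μ̂ dζ. -/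
open MeasureTheory

/-- Detailed balance for the involution-based Metropolis proposal: if `Ψ` is a
`ζ`-preserving measurable involution and `μ̂ > 0` is a measurable density, then with
acceptance function `α(z) = min(1, μ̂(Ψ z)/μ̂ z)`, for all bounded measurable `f, g`,
`∫ f(z) g(Ψ z) α(z) μ̂(z) dζ = ∫ g(z) f(Ψ z) α(z) μ̂(z) dζ`. -/
theorem involution_metropolis_detailed_balance
    {A : Type*} [MeasurableSpace A] (ζ : Measure A)
    (Ψ : A → A) (hΨmeas : Measurable Ψ) (hΨinv : Ψ ∘ Ψ = id)
    (hΨpres : MeasurePreserving Ψ ζ ζ)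
    (μhat : A → ℝ) (hμmeas : Measurable μhat) (hμpos : ∀ z, 0 < μhat z)
    (f g : A → ℝ) (hf : Measurable f) (hg : Measurable g)
    (hfbdd : ∃ C : ℝ, ∀ z, |f z| ≤ C) (hgbdd : ∃ C : ℝ, ∀ z, |g z| ≤ C) :
    ∫ z, f z * g (Ψ z) * min 1 (μhat (Ψ z) / μhat z) * μhat z ∂ζ =
    ∫ z, g z * f (Ψ z) * min 1 (μhat (Ψ z) / μhat z) * μhat z ∂ζ := by
  have hΨΨ : ∀ z, Ψ (Ψ z) = z := fun z => congrFun hΨinv z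
  -- pointwise: min 1 (b/a) * a = min a b for a > 0
  have hmin : ∀ z, min 1 (μhat (Ψ z) / μhat z) * μhat z
      = min (μhat z) (μhat (Ψ z)) := by
    intro z
    have ha := (hμpos z).ne'
    rw [min_mul_of_nonneg _ _ (hμpos z).le, one_mul, div_mul_cancel₀ _ ha]
  have hmin' : ∀ z, min 1 (μhat z / μhat (Ψ z)) * μhat (Ψ z)
      = min (μhat (Ψ z)) (μhat z) := by
    intro z
    have h := hmin (Ψ z)
    rwa [hΨΨ] at h
  have key : ∀ z, g z * f (Ψ z) * min 1 (μhat (Ψ z) / μhat z) * μhat z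
      = (fun w => f w * g (Ψ w) * min 1 (μhat (Ψ w) / μhat w) * μhat w) (Ψ z) := by
    intro z
    simp only [hΨΨ]
    rw [mul_assoc, hmin]
    conv_rhs => rw [mul_assoc, hmin']
    rw [min_comm]
    ring
  calc ∫ z, f z * g (Ψ z) * min 1 (μhat (Ψ z) / μhat z) * μhat z ∂ζ
      = ∫ z, (fun w => f w * g (Ψ w) * min 1 (μhat (Ψ w) / μhat w) * μhat w) (Ψ z) ∂ζ := by
        exact (MeasurePreserving.integral_comp'
          (f := MeasurableEquiv.mk ⟨Ψ, Ψ, hΨΨ, hΨΨ⟩ hΨmeas hΨmeas) hΨpres _).symm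
    _ = ∫ z, g z * f (Ψ z) * min 1 (μhat (Ψ z) / μhat z) * μhat z ∂ζ := by
        simp only [← key]
end

section
/- Let μ : ℝ^d → (0,∞) be continuously differentiable, M symmetric positive definite, h > 0, δ > 0, and (θ,ρ) ∈ ℝ^d × ℝ^d. Define micro(θ,ρ) as the least ℓ ∈ {2^n : n ∈ ℕ} such that the leapfrog trajectory (θ^{(j)},ρ^{(j)}) = Φ_{h/ℓ}^j(θ,ρ), 0 ≤ j ≤ ℓ, satisfies max_j H(θ^{(j)},ρ^{(j)}) − min_j H(θ^{(j)},ρ^{(j)}) ≤ δ. Suppose ℓ = micro(θ,ρ) exists, and set (θ',ρ') = Φ_{h/ℓ}^ℓ(θ,ρ). Then micro(θ',−ρ') exists and ℓ ≥ micro(θ',−ρ'). -/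
open Matrix

/-- The Hamiltonian `H(θ,ρ) = -log μ(θ) + (1/2) ρᵀ M⁻¹ ρ`. -/
noncomputable def Ham {d : ℕ} (μ : (Fin d → ℝ) → ℝ) (M : Matrix (Fin d) (Fin d) ℝ)
    (z : (Fin d → ℝ) × (Fin d → ℝ)) : ℝ :=
  -Real.log (μ z.1) + (1 / 2) * (z.2 ⬝ᵥ M⁻¹.mulVec z.2)

/-- `EnergyOK μ M h δ z ℓ` says the `ℓ`-step leapfrog trajectory with micro step size `h/ℓ`
started at `z` has total energy range (max minus min of `H`) at most `δ`. -/
noncomputable def EnergyOK {d : ℕ} (μ : (Fin d → ℝ) → ℝ) (M : Matrix (Fin d) (Fin d) ℝ)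
    (h δ : ℝ) (z : (Fin d → ℝ) × (Fin d → ℝ)) (ℓ : ℕ) : Prop :=
  ∀ j ≤ ℓ, ∀ j' ≤ ℓ,
    Ham μ M ((leapfrog μ M (h / (ℓ : ℝ)))^[j] z) -
      Ham μ M ((leapfrog μ M (h / (ℓ : ℝ)))^[j'] z) ≤ δ

/-- `micro(θ,ρ,μ,M,h,δ)`: the smallest power of two `ℓ` such that the `ℓ`-step leapfrog
trajectory with step size `h/ℓ` keeps the energy range at most `δ`. -/
noncomputable def micro {d : ℕ} (μ : (Fin d → ℝ) → ℝ) (M : Matrix (Fin d) (Fin d) ℝ)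
    (h δ : ℝ) (z : (Fin d → ℝ) × (Fin d → ℝ)) : ℕ :=
  sInf {ℓ : ℕ | (∃ n : ℕ, ℓ = 2 ^ n) ∧ EnergyOK μ M h δ z ℓ}

lemma leapfrog_rev {d : ℕ} (μ : (Fin d → ℝ) → ℝ) (M : Matrix (Fin d) (Fin d) ℝ)
    (h : ℝ) (z : (Fin d → ℝ) × (Fin d → ℝ)) :
    leapfrog μ M h ((leapfrog μ M h z).1, -(leapfrog μ M h z).2) = (z.1, -z.2) := by
  simp only [leapfrog]
  set g := gradLog μ with hg
  set θ' := z.1 + M⁻¹.mulVec (h • z.2 + (h ^ 2 / 2) • g z.1) with hθ'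
  set ρ' := z.2 + (h / 2) • (g z.1 + g θ') with hρ'
  have key : h • (-ρ') + (h ^ 2 / 2) • g θ' = -(h • z.2 + (h ^ 2 / 2) • g z.1) := by
    rw [hρ']
    have : (h:ℝ) * (h/2) = h^2/2 := by ring
    simp only [smul_neg, smul_add, smul_smul, this]
    abel
  have h1 : θ' + M⁻¹.mulVec (h • (-ρ') + (h ^ 2 / 2) • g θ') = z.1 := by
    rw [key, Matrix.mulVec_neg, hθ']
    abel
  rw [h1]
  have h2 : -ρ' + (h / 2) • (g θ' + g z.1) = -z.2 := by
    rw [hρ', add_comm (g z.1)]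
    abel
  rw [h2]

lemma ham_neg {d : ℕ} (μ : (Fin d → ℝ) → ℝ) (M : Matrix (Fin d) (Fin d) ℝ)
    (a b : Fin d → ℝ) : Ham μ M (a, -b) = Ham μ M (a, b) := by
  simp [Ham, Matrix.mulVec_neg, dotProduct_neg, neg_dotProduct]

lemma iterate_rev {d : ℕ} (μ : (Fin d → ℝ) → ℝ) (M : Matrix (Fin d) (Fin d) ℝ)
    (h : ℝ) (z : (Fin d → ℝ) × (Fin d → ℝ)) (ℓ : ℕ) :
    ∀ j ≤ ℓ,
      (leapfrog μ M h)^[j]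
        (((leapfrog μ M h)^[ℓ] z).1, -((leapfrog μ M h)^[ℓ] z).2) =
      (((leapfrog μ M h)^[ℓ - j] z).1, -((leapfrog μ M h)^[ℓ - j] z).2) := by
  intro j hj
  induction j with
  | zero => simp
  | succ k ih =>
    have hk : k ≤ ℓ := Nat.le_of_succ_le hj
    have hlk : ℓ - k = (ℓ - (k + 1)) + 1 := by omega
    rw [Function.iterate_succ_apply', ih hk, hlk, Function.iterate_succ_apply']
    exact leapfrog_rev μ M h ((leapfrog μ M h)^[ℓ - (k+1)] z)

/-- If `ℓ = micro(θ,ρ)` exists and `(θ',ρ') = Φ_{h/ℓ}^ℓ(θ,ρ)`, then `micro(θ',-ρ')` exists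
and `ℓ ≥ micro(θ',-ρ')`. -/
theorem micro_backward_le_forward (d : ℕ) (μ : (Fin d → ℝ) → ℝ)
    (hμ : ContDiff ℝ 1 μ) (hμpos : ∀ θ, 0 < μ θ)
    (M : Matrix (Fin d) (Fin d) ℝ) (hM : M.PosDef)
    (h δ : ℝ) (hh : 0 < h) (hδ : 0 < δ) (θ ρ : Fin d → ℝ)
    (hex : ∃ n : ℕ, EnergyOK μ M h δ (θ, ρ) (2 ^ n)) :
    (∃ n : ℕ, EnergyOK μ M h δ
        (((leapfrog μ M (h / (micro μ M h δ (θ, ρ) : ℝ)))^[micro μ M h δ (θ, ρ)] (θ, ρ)).1,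
          -((leapfrog μ M (h / (micro μ M h δ (θ, ρ) : ℝ)))^[micro μ M h δ (θ, ρ)] (θ, ρ)).2)
        (2 ^ n)) ∧
    micro μ M h δ
        (((leapfrog μ M (h / (micro μ M h δ (θ, ρ) : ℝ)))^[micro μ M h δ (θ, ρ)] (θ, ρ)).1,
          -((leapfrog μ M (h / (micro μ M h δ (θ, ρ) : ℝ)))^[micro μ M h δ (θ, ρ)] (θ, ρ)).2)
      ≤ micro μ M h δ (θ, ρ) := by
  set S := {ℓ : ℕ | (∃ n : ℕ, ℓ = 2 ^ n) ∧ EnergyOK μ M h δ (θ, ρ) ℓ} with hS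
  have hne : S.Nonempty := by
    obtain ⟨n, hn⟩ := hex
    exact ⟨2 ^ n, ⟨n, rfl⟩, hn⟩
  have hmem : micro μ M h δ (θ, ρ) ∈ S := Nat.sInf_mem hne
  obtain ⟨⟨n, hn⟩, hEK⟩ := hmem
  set ℓ := micro μ M h δ (θ, ρ) with hℓ
  set w := (leapfrog μ M (h / (ℓ : ℝ)))^[ℓ] (θ, ρ) with hw
  have hEKrev : EnergyOK μ M h δ (w.1, -w.2) ℓ := by
    intro j hj j' hj'
    rw [iterate_rev μ M (h / (ℓ : ℝ)) (θ, ρ) ℓ j hj,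
        iterate_rev μ M (h / (ℓ : ℝ)) (θ, ρ) ℓ j' hj', ham_neg, ham_neg]
    exact hEK (ℓ - j) (Nat.sub_le _ _) (ℓ - j') (Nat.sub_le _ _)
  refine ⟨⟨n, hn ▸ hEKrev⟩, ?_⟩
  exact Nat.sInf_le ⟨⟨n, hn⟩, hEKrev⟩
end

section
/- Let a ≤ 0 ≤ i ≤ b be integers, and let μ_j > 0 for a ≤ j ≤ b and p⁺_r > 0, p⁻_r > 0 for a ≤ r ≤ b−1 be real numbers. For an integer k with a ≤ k ≤ b define Z(k) = Σ_{j=k}^{b} μ_j · Π_{r=k}^{j−1} (p⁻_r / p⁺_r) + Σ_{j=a}^{k−1} μ_j · Π_{r=j}^{k−1} (p⁺_r / p⁻_r), with empty products equal to 1. Then Z(i) · Π_{r=0}^{i−1} p⁻_r = Z(0) · Π_{r=0}^{i−1} p⁺_r. -/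
/-!
Viewing the orbit from index `k + 1` instead of `k` multiplies every weight
`μ_j Π (p⁻/p⁺)` resp. `μ_j Π (p⁺/p⁻)` by `p⁺_k / p⁻_k`, so `Z(k + 1) p⁻_k = Z(k) p⁺_k`;
the identity follows by telescoping this step from `0` to `i`.
-/

open Finset

theorem Int.mul_prod_Ico_eq_of_forall_succ {M : Type*} [CommMonoid M] {f g h : ℤ → M} {m n : ℤ}
    (hmn : m ≤ n) (hstep : ∀ k, m ≤ k → k < n → f (k + 1) * g k = f k * h k) :
    f n * ∏ r ∈ Ico m n, g r = f m * ∏ r ∈ Ico m n, h r := by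
  induction n, hmn using Int.leInduction with
  | base => simp
  | succ n hmn ih =>
    rw [← insert_Ico_right_eq_Ico_add_one hmn, prod_insert right_notMem_Ico,
      prod_insert right_notMem_Ico]
    calc f (n + 1) * (g n * ∏ r ∈ Ico m n, g r)
        = f (n + 1) * g n * ∏ r ∈ Ico m n, g r := by rw [mul_assoc]
      _ = h n * (f n * ∏ r ∈ Ico m n, g r) := by
        rw [hstep n hmn (lt_add_one n)]; ac_rfl
      _ = f m * (h n * ∏ r ∈ Ico m n, h r) := by
        rw [ih fun k hmk hkn => hstep k hmk (hkn.trans (lt_add_one n))]; ac_rfl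

section

variable {R : Type*} [CommSemiring R] (μ f : ℤ → R)

theorem sum_Icc_mul_prod_Ico_eq_add_mul {k b : ℤ} (hkb : k ≤ b) :
    ∑ j ∈ Icc k b, μ j * ∏ r ∈ Ico k j, f r
      = μ k + f k * ∑ j ∈ Icc (k + 1) b, μ j * ∏ r ∈ Ico (k + 1) j, f r := by
  rw [← insert_Icc_add_one_left_eq_Icc hkb, sum_insert (by simp), Ico_self, prod_empty,
    mul_one, mul_sum]
  congr 1
  refine sum_congr rfl fun j hj => ?_
  rw [← insert_Ico_add_one_left_eq_Ico (by simp at hj; omega), prod_insert (by simp)]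
  ring

theorem sum_Icc_mul_prod_Ico_add_one_eq_mul {a k : ℤ} (hak : a ≤ k) :
    ∑ j ∈ Icc a k, μ j * ∏ r ∈ Ico j (k + 1), f r
      = (∑ j ∈ Icc a (k - 1), μ j * ∏ r ∈ Ico j k, f r + μ k) * f k := by
  rw [← insert_Icc_sub_one_right_eq_Icc hak, sum_insert (by simp), add_comm, add_mul, sum_mul,
    Ico_add_one_right_eq_Icc, Icc_self, prod_singleton]
  congr 1
  refine sum_congr rfl fun j hj => ?_
  rw [← insert_Ico_right_eq_Ico_add_one (by simp at hj; omega), prod_insert right_notMem_Ico]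
  ring

section

variable {K : Type*} [Field K]

noncomputable def walnutsNormalizer (a b : ℤ) (μ pp pm : ℤ → K) (k : ℤ) : K :=
  (∑ j ∈ Icc k b, μ j * ∏ r ∈ Ico k j, (pm r / pp r)) +
    ∑ j ∈ Icc a (k - 1), μ j * ∏ r ∈ Ico j k, (pp r / pm r)

theorem walnutsNormalizer_add_one_mul {a b k : ℤ} (μ pp pm : ℤ → K) (hak : a ≤ k) (hkb : k < b)
    (hpp : pp k ≠ 0) (hpm : pm k ≠ 0) :
    walnutsNormalizer a b μ pp pm (k + 1) * pm k = walnutsNormalizer a b μ pp pm k * pp k := by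
  unfold walnutsNormalizer
  rw [sum_Icc_mul_prod_Ico_eq_add_mul μ _ hkb.le, add_sub_cancel_right,
    sum_Icc_mul_prod_Ico_add_one_eq_mul μ _ hak]
  field_simp
  ring

end

theorem walnuts_normalizing_constant_identity_general
    (a b i : ℤ) (ha : a ≤ 0) (h0i : 0 ≤ i) (hib : i ≤ b)
    (μf pp pm : ℤ → ℝ)
    (hpp : ∀ r, a ≤ r → r ≤ b - 1 → 0 < pp r)
    (hpm : ∀ r, a ≤ r → r ≤ b - 1 → 0 < pm r) :
    (let Z : ℤ → ℝ := fun k =>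
      (∑ j ∈ Finset.Icc k b, μf j * ∏ r ∈ Finset.Ico k j, (pm r / pp r)) +
      ∑ j ∈ Finset.Icc a (k - 1), μf j * ∏ r ∈ Finset.Ico j k, (pp r / pm r)
    Z i * ∏ r ∈ Finset.Ico (0 : ℤ) i, pm r = Z 0 * ∏ r ∈ Finset.Ico (0 : ℤ) i, pp r) := by
  refine Int.mul_prod_Ico_eq_of_forall_succ (f := walnutsNormalizer a b μf pp pm) h0i
    fun k h0k hki => ?_
  have hak : a ≤ k := ha.trans h0k
  have hkb : k ≤ b - 1 := by omega
  exact walnutsNormalizer_add_one_mul μf pp pm hak (by omega)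
    (hpp k hak hkb).ne' (hpm k hak hkb).ne'

/-- The key normalizing-constant identity for WALNUTS with multinomial index selection
(equation (4.8) of the paper): with
`Z(k) = Σ_{j=k}^{b} μ_j Π_{r=k}^{j-1} (p⁻_r/p⁺_r) + Σ_{j=a}^{k-1} μ_j Π_{r=j}^{k-1} (p⁺_r/p⁻_r)`,
one has `Z(i) · Π_{r=0}^{i-1} p⁻_r = Z(0) · Π_{r=0}^{i-1} p⁺_r`. -/
theorem walnuts_normalizing_constant_identity
    (a b i : ℤ) (ha : a ≤ 0) (h0i : 0 ≤ i) (hib : i ≤ b)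
    (μf pp pm : ℤ → ℝ)
    (hμ : ∀ j, a ≤ j → j ≤ b → 0 < μf j)
    (hpp : ∀ r, a ≤ r → r ≤ b - 1 → 0 < pp r)
    (hpm : ∀ r, a ≤ r → r ≤ b - 1 → 0 < pm r) :
    (let Z : ℤ → ℝ := fun k =>
      (∑ j ∈ Finset.Icc k b, μf j * ∏ r ∈ Finset.Ico k j, (pm r / pp r)) +
      ∑ j ∈ Finset.Icc a (k - 1), μf j * ∏ r ∈ Finset.Ico j k, (pp r / pm r)
    Z i * ∏ r ∈ Finset.Ico (0 : ℤ) i, pm r = Z 0 * ∏ r ∈ Finset.Ico (0 : ℤ) i, pp r) :=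
  walnuts_normalizing_constant_identity_general a b i ha h0i hib μf pp pm hpp hpm
end
end
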